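/- arXiv:2307.12516 — 2 statements merged into one kernel-verified Lean document; each statement's English description precedes it below -/
import Mathlib

section
/- Let v : 2^O → ℝ be an order-neutral submodular function and τ ∈ ℝ, with β^τ(S) the number of entries ≥ τ in the sorted telescoping sum vector of S. Then for any bundle X ⊆ O there exist disjoint sets X^{≥τ}, X^{<τ} with X^{≥τ} ∪ X^{<τ} = X such that β^τ(X) = β^τ(X^{≥τ}) = |X^{≥τ}|. -/
open Finset

/-- A set function is submodular: `v ∅ = 0` and decreasing marginal gains. -/
def Submodular {α : Type*} [DecidableEq α] (v : Finset α → ℝ) : Prop :=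
  v ∅ = 0 ∧ ∀ S T : Finset α, S ⊆ T → ∀ o ∉ T,
    v (insert o T) - v T ≤ v (insert o S) - v S

/-- The telescoping sum vector of marginal gains along an ordering `l`. -/
def margList {α : Type*} [DecidableEq α] (v : Finset α → ℝ) (l : List α) : List ℝ :=
  (List.range l.length).map fun j =>
    v ((l.take (j + 1)).toFinset) - v ((l.take j).toFinset)

/-- The sorted (ascending) telescoping sum vector. -/
noncomputable def sortedVec {α : Type*} [DecidableEq α] (v : Finset α → ℝ) (l : List α) :
    List ℝ :=
  Multiset.sort (margList v l) (· ≤ ·)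

/-- `l` is an ordering of the bundle `S`. -/
def IsOrdering {α : Type*} [DecidableEq α] (l : List α) (S : Finset α) : Prop :=
  l.Nodup ∧ l.toFinset = S

/-- Order-neutrality: any two orderings of a bundle give the same sorted telescoping
sum vector. -/
def OrderNeutral {α : Type*} [DecidableEq α] (v : Finset α → ℝ) : Prop :=
  ∀ (S : Finset α) (l₁ l₂ : List α), IsOrdering l₁ S → IsOrdering l₂ S →
    sortedVec v l₁ = sortedVec v l₂

/-!
Peel off elements one at a time. If `β^τ(X) < |X|`, some marginal gain along an ordering of `X`
is below `τ`, say the gain of `x`; by submodularity the gain of `x` at the end of the ordering,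
`v X - v (X \ {x})`, is smaller still. Reordering `X` with `x` last therefore shows
`β^τ(X) = β^τ(X \ {x})`, and `x` goes into `X^{<τ}`. When `β^τ(X) = |X|` we stop with `X^{≥τ} = X`.
-/

theorem isOrdering_toList_erase_append {α : Type*} [DecidableEq α] {X : Finset α} {x : α}
    (hx : x ∈ X) : IsOrdering ((X.erase x).toList ++ [x]) X := by
  refine ⟨(nodup_toList _).append (List.nodup_singleton x) ?_, ?_⟩
  · simp
  · simp [insert_erase hx]

theorem exists_disjoint_union_eq_of_exists_erase {α : Type*} [DecidableEq α]
    (β : Finset α → ℕ) (hβ : ∀ X : Finset α, β X ≠ X.card → ∃ x ∈ X, β (X.erase x) = β X)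
    (X : Finset α) :
    ∃ A B : Finset α, Disjoint A B ∧ A ∪ B = X ∧ β X = β A ∧ β A = A.card := by
  induction X using Finset.strongInduction with
  | _ X ih =>
  by_cases hX : β X = X.card
  · exact ⟨X, ∅, disjoint_empty_right _, union_empty _, rfl, hX⟩
  obtain ⟨x, hxX, hβx⟩ := hβ X hX
  obtain ⟨A, B, hAB, hUnion, hβA, hA⟩ := ih (X.erase x) (erase_ssubset hxX)
  have hxA : x ∉ A := fun hx => notMem_erase x X (hUnion ▸ mem_union_left B hx)
  refine ⟨A, insert x B, disjoint_insert_right.mpr ⟨hxA, hAB⟩, ?_, hβx ▸ hβA, hA⟩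
  rw [union_insert, hUnion, insert_erase hxX]

section margList

variable {α : Type*} [DecidableEq α] (v : Finset α → ℝ)

theorem length_margList (l : List α) : (margList v l).length = l.length := by
  simp [margList]

theorem margList_append_singleton (l : List α) (x : α) :
    margList v (l ++ [x]) = margList v l ++ [v (l ++ [x]).toFinset - v l.toFinset] := by
  unfold margList
  rw [List.length_append, List.length_singleton, List.range_succ, List.map_append]
  congr 1
  · refine List.map_congr_left fun j hj => ?_
    rw [List.mem_range] at hj
    rw [List.take_append_of_le_length (by omega), List.take_append_of_le_length (by omega)]
  · rw [List.map_singleton, List.take_left,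
      show l.length + 1 = (l ++ [x]).length by simp, List.take_length]

theorem exists_marginal_erase_le_of_mem_margList {v : Finset α → ℝ} (hsub : Submodular v)
    {l : List α} (hl : l.Nodup) {a : ℝ} (ha : a ∈ margList v l) :
    ∃ x ∈ l.toFinset, v l.toFinset - v (l.toFinset.erase x) ≤ a := by
  obtain ⟨j, hj, rfl⟩ := by simpa only [margList, List.mem_map, List.mem_range] using ha
  have htake : l.take (j + 1) = l.take j ++ [l[j]] := (List.take_concat_get' l j hj).symm
  have hxtake : l[j] ∉ l.take j := fun h =>
    List.disjoint_of_nodup_append (htake ▸ (List.take_sublist _ _).nodup hl) h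
      (List.mem_singleton_self _)
  have hxl : l[j] ∈ l.toFinset := List.mem_toFinset.mpr (List.getElem_mem hj)
  have hprefix : (l.take j).toFinset ⊆ l.toFinset.erase l[j] := fun b hb => by
    rw [List.mem_toFinset] at hb
    exact mem_erase.mpr ⟨fun h => hxtake (h ▸ hb),
      List.mem_toFinset.mpr ((List.take_sublist _ _).mem hb)⟩
  have hinsert : insert l[j] (l.take j).toFinset = (l.take (j + 1)).toFinset := by
    rw [htake, List.toFinset_append, union_comm]
    rfl
  have hgain := hsub.2 _ _ hprefix l[j] (notMem_erase _ _)
  rw [insert_erase hxl, hinsert] at hgain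
  exact ⟨l[j], hxl, hgain⟩

end margList

theorem decomposition_exists_general {α : Type*} [DecidableEq α]
    (v : Finset α → ℝ) (τ : ℝ) (hsub : Submodular v)
    (β : Finset α → ℕ)
    (hβ : ∀ (S : Finset α) (l : List α), IsOrdering l S →
      β S = (margList v l).countP (fun x => decide (τ ≤ x))) :
    ∀ X : Finset α, ∃ A B : Finset α,
      Disjoint A B ∧ A ∪ B = X ∧ β X = β A ∧ β A = A.card := by
  refine exists_disjoint_union_eq_of_exists_erase β fun X hX => ?_
  have hXord : IsOrdering X.toList X := ⟨X.nodup_toList, X.toList_toFinset⟩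
  obtain ⟨a, ha, hτa⟩ : ∃ a ∈ margList v X.toList, ¬ τ ≤ a := by
    by_contra! hall
    refine hX ?_
    rw [hβ X _ hXord, List.countP_eq_length.mpr (by simpa using hall), length_margList,
      length_toList]
  obtain ⟨x, hx, hgain⟩ := exists_marginal_erase_le_of_mem_margList hsub X.nodup_toList ha
  rw [toList_toFinset] at hx hgain
  have hlast := isOrdering_toList_erase_append hx
  refine ⟨x, hx, ?_⟩
  rw [hβ X _ hlast, hβ _ _ ⟨nodup_toList _, toList_toFinset _⟩, margList_append_singleton,
    List.countP_append, hlast.2, toList_toFinset]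
  simp [lt_of_le_of_lt hgain (not_le.mp hτa)]

/-- decomposition of any bundle `X` into a clean part `X^{≥τ}` and a
supplementary part `X^{<τ}` with `β^τ(X) = β^τ(X^{≥τ}) = |X^{≥τ}|`. -/
theorem decomposition_exists {α : Type*} [Fintype α] [DecidableEq α]
    (v : Finset α → ℝ) (τ : ℝ) (hsub : Submodular v) (hon : OrderNeutral v)
    (β : Finset α → ℕ)
    (hβ : ∀ (S : Finset α) (l : List α), IsOrdering l S →
      β S = (margList v l).countP (fun x => decide (τ ≤ x))) :
    ∀ X : Finset α, ∃ A B : Finset α,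
      Disjoint A B ∧ A ∪ B = X ∧ β X = β A ∧ β A = A.card :=
  decomposition_exists_general v τ hsub β hβ
end

section
/- Let agents have {−1,0,c}-additive valuations for a positive integer c. Then every leximin allocation is envy-free up to one item (EF1): for any two agents i, j there exists an item o ∈ X_i ∪ X_j such that v_i(X_i − o) ≥ v_i(X_j − o). -/
/-
In a leximin allocation no transfer of a single item may raise the smaller of the two
utilities involved, nor help one agent without hurting the other. With values in {-1, 0, c} the
second fact puts every item with an agent who values it at least as much as anyone else, so the
bundle of `j` is worth at least as much to `j` as to `i`. If that bundle holds an item worth `c`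
to `i`, moving it to `i` would raise the minimum unless EF1 holds after removing it; if the bundle
of `i` holds an item worth `-1` to `i`, handing it to `j` would raise the minimum unless EF1 holds
after removing it. Otherwise `i` values its own bundle at `≥ 0` and that of `j` at `≤ 0`.
-/

open Finset

/-- Additive utility of a bundle given per-item values. -/
def util {α : Type*} [DecidableEq α] (w : α → ℤ) (S : Finset α) : ℤ := ∑ o ∈ S, w o

/-- A complete allocation: bundles are pairwise disjoint and cover all items. -/
def CompleteAlloc {α : Type*} [Fintype α] [DecidableEq α] {n : ℕ}
    (X : Fin n → Finset α) : Prop :=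
  (∀ i j : Fin n, i ≠ j → Disjoint (X i) (X j)) ∧ Finset.univ.biUnion X = Finset.univ

/-- The ascending-sorted utility vector of an allocation. -/
noncomputable def sUtil {α : Type*} [Fintype α] [DecidableEq α] {n : ℕ}
    (value : Fin n → α → ℤ) (X : Fin n → Finset α) : List ℤ :=
  Multiset.sort (Multiset.map (fun i => util (value i) (X i)) Finset.univ.val) (· ≤ ·)

/-- A leximin allocation: a complete allocation whose sorted utility vector is not
lexicographically dominated by that of any other complete allocation. -/
def Leximin {α : Type*} [Fintype α] [DecidableEq α] {n : ℕ}
    (value : Fin n → α → ℤ) (X : Fin n → Finset α) : Prop :=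
  CompleteAlloc X ∧ ∀ Y : Fin n → Finset α, CompleteAlloc Y →
    ¬ List.Lex (· < ·) (sUtil value X) (sUtil value Y)

section SortedLex

variable {β : Type*} [LinearOrder β]

theorem List.lex_lt_of_count_lt {l₁ l₂ : List β} (h₁ : l₁.Pairwise (· ≤ ·))
    (h₂ : l₂.Pairwise (· ≤ ·)) (hlen : l₁.length = l₂.length) {x : β}
    (hbelow : ∀ y < x, l₁.count y = l₂.count y) (hx : l₂.count x < l₁.count x) :
    List.Lex (· < ·) l₁ l₂ := by
  induction l₁ generalizing l₂ with
  | nil => simp at hx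
  | cons a t₁ ih =>
    obtain _ | ⟨b, t₂⟩ := l₂
    · simp at hlen
    have hax : a ≤ x := by
      obtain rfl | hx' := List.mem_cons.mp (List.count_pos_iff.mp (Nat.zero_lt_of_lt hx))
      exacts [le_rfl, List.rel_of_pairwise_cons h₁ hx']
    obtain hab | rfl | hba := lt_trichotomy a b
    · exact List.Lex.rel hab
    · refine List.Lex.cons (ih h₁.of_cons h₂.of_cons (by simpa using hlen) (fun y hy => ?_) ?_)
      · simpa [List.count_cons] using hbelow y hy
      · simpa [List.count_cons] using hx
    · have hb : b ∉ a :: t₁ := fun hb => by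
        obtain rfl | hb := List.mem_cons.mp hb
        exacts [lt_irrefl _ hba, (List.rel_of_pairwise_cons h₁ hb).not_gt hba]
      have := hbelow b (hba.trans_le hax)
      simp [List.count_eq_zero_of_not_mem hb] at this

theorem Multiset.sort_lex_of_count_lt {s t : Multiset β} (hcard : card s = card t) {x : β}
    (hbelow : ∀ y < x, s.count y = t.count y) (hx : t.count x < s.count x) :
    List.Lex (· < ·) (s.sort (· ≤ ·)) (t.sort (· ≤ ·)) := by
  refine List.lex_lt_of_count_lt (pairwise_sort _ _) (pairwise_sort _ _) (by simpa using hcard)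
    (x := x) (fun y hy => ?_) ?_ <;> simp only [← coe_count, sort_eq]
  exacts [hbelow y hy, hx]

theorem Multiset.sort_cons_lex_of_lt (M : Multiset β) {a a' : β} (h : a < a') :
    List.Lex (· < ·) ((a ::ₘ M).sort (· ≤ ·)) ((a' ::ₘ M).sort (· ≤ ·)) := by
  refine sort_lex_of_count_lt (by simp) (x := a) (fun y hy => ?_) ?_
  · simp [hy.ne, (hy.trans h).ne]
  · simp [h.ne]

theorem Multiset.sort_cons_cons_lex_of_min_lt (M : Multiset β) {a b a' b' : β}
    (h : min a b < min a' b') :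
    List.Lex (· < ·) ((a ::ₘ b ::ₘ M).sort (· ≤ ·)) ((a' ::ₘ b' ::ₘ M).sort (· ≤ ·)) := by
  obtain ⟨ha', hb'⟩ := lt_min_iff.mp h
  refine sort_lex_of_count_lt (by simp) (x := min a b) (fun y hy => ?_) ?_
  · obtain ⟨ha, hb⟩ := lt_min_iff.mp hy
    simp [ha.ne, hb.ne, (hy.trans ha').ne, (hy.trans hb').ne]
  · rcases min_choice a b with hm | hm <;> rw [hm] at ha' hb' ⊢ <;>
      simp only [count_cons, if_neg ha'.ne, if_neg hb'.ne] <;> split_ifs <;> omega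

theorem Multiset.sort_cons_cons_lex_of_lt (M : Multiset β) {a b a' b' : β}
    (h : (a, b) < (a', b')) :
    List.Lex (· < ·) ((a ::ₘ b ::ₘ M).sort (· ≤ ·)) ((a' ::ₘ b' ::ₘ M).sort (· ≤ ·)) := by
  rcases Prod.lt_iff.mp h with ⟨ha, hb⟩ | ⟨ha, hb⟩
  · obtain hb | rfl := hb.lt_or_eq
    · exact sort_cons_cons_lex_of_min_lt M (min_lt_min ha hb)
    · exact sort_cons_lex_of_lt _ ha
  · obtain ha | rfl := ha.lt_or_eq
    · exact sort_cons_cons_lex_of_min_lt M (min_lt_min ha hb)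
    · simpa only [cons_swap a] using sort_cons_lex_of_lt (a ::ₘ M) hb

theorem sort_map_lex_of_update_two {ι : Type*} [Fintype ι] [DecidableEq ι] {f g : ι → β}
    {k l : ι} (hkl : k ≠ l) (hfg : ∀ m, m ≠ k → m ≠ l → f m = g m)
    (h : min (f k) (f l) < min (g k) (g l) ∨ (f k, f l) < (g k, g l)) :
    List.Lex (· < ·) ((univ.val.map f).sort (· ≤ ·)) ((univ.val.map g).sort (· ≤ ·)) := by
  have huniv : (univ : Finset ι).val = k ::ₘ l ::ₘ ((univ.erase k).erase l).val := by
    rw [erase_val, erase_val, Multiset.cons_erase, Multiset.cons_erase] <;>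
      simp [Multiset.mem_erase_of_ne hkl.symm]
  have hrest : ((univ.erase k).erase l).val.map f = ((univ.erase k).erase l).val.map g :=
    Multiset.map_congr rfl fun m hm => by
      simp only [mem_val, mem_erase] at hm
      exact hfg m hm.2.1 hm.1
  rw [huniv, Multiset.map_cons, Multiset.map_cons, Multiset.map_cons, Multiset.map_cons, hrest]
  rcases h with h | h
  exacts [Multiset.sort_cons_cons_lex_of_min_lt _ h, Multiset.sort_cons_cons_lex_of_lt _ h]

end SortedLex

theorem util_insert {α : Type*} [DecidableEq α] (w : α → ℤ) {S : Finset α} {o : α}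
    (ho : o ∉ S) : util w (insert o S) = util w S + w o := by
  rw [util, sum_insert ho, add_comm, util]

theorem util_erase {α : Type*} [DecidableEq α] (w : α → ℤ) {S : Finset α} {o : α}
    (ho : o ∈ S) : util w (S.erase o) = util w S - w o :=
  sum_erase_eq_sub ho

/-- Gives item `o` to agent `k`; since `o` has a unique owner in a complete allocation, erasing it
from every other bundle just takes it away from that owner. -/
def transfer {α ι : Type*} [DecidableEq α] [DecidableEq ι] (X : ι → Finset α) (o : α) (k : ι) :
    ι → Finset α :=
  fun m => if m = k then insert o (X k) else (X m).erase o

section Leximin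

variable {α : Type*} [Fintype α] [DecidableEq α] {n : ℕ}

theorem CompleteAlloc.transfer {X : Fin n → Finset α} (hX : CompleteAlloc X) (o : α)
    (k : Fin n) : CompleteAlloc (transfer X o k) := by
  obtain ⟨hdisj, hcover⟩ := hX
  have hdisj_of_ne_k (m m' : Fin n) (hmm' : m ≠ m') (hm'k : m' ≠ k) :
      Disjoint (_root_.transfer X o k m) (_root_.transfer X o k m') := by
    simp only [_root_.transfer, if_neg hm'k]
    split_ifs with hmk
    · subst hmk
      exact disjoint_insert_left.mpr
        ⟨notMem_erase o _, (hdisj m m' hmm').mono_right (erase_subset o _)⟩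
    · exact (hdisj m m' hmm').mono (erase_subset o _) (erase_subset o _)
  refine ⟨fun m m' hmm' => ?_, eq_univ_of_forall fun x => mem_biUnion.mpr ?_⟩
  · by_cases hm'k : m' = k
    · subst hm'k
      exact (hdisj_of_ne_k m' m hmm'.symm hmm').symm
    · exact hdisj_of_ne_k m m' hmm' hm'k
  · obtain ⟨m, -, hxm⟩ := mem_biUnion.mp (hcover ▸ mem_univ x)
    by_cases hxo : x = o
    · exact ⟨k, mem_univ k, by simp [_root_.transfer, hxo]⟩
    · refine ⟨m, mem_univ m, ?_⟩
      by_cases hmk : m = k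
      · subst hmk
        simp [_root_.transfer, hxm]
      · simp [_root_.transfer, hmk, hxo, hxm]

variable {value : Fin n → α → ℤ} {X : Fin n → Finset α}

theorem Leximin.not_improved_by_transfer (hlex : Leximin value X) {k l : Fin n} (hkl : k ≠ l)
    {o : α} (ho : o ∈ X l) :
    ¬ (min (util (value k) (X k)) (util (value l) (X l)) <
        min (util (value k) (X k) + value k o) (util (value l) (X l) - value l o) ∨
      (util (value k) (X k), util (value l) (X l)) <
        (util (value k) (X k) + value k o, util (value l) (X l) - value l o)) := by
  intro h
  have hnot (m : Fin n) (hml : m ≠ l) : o ∉ X m := disjoint_left.mp (hlex.1.1 l m hml.symm) ho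
  refine hlex.2 _ (hlex.1.transfer o k) (sort_map_lex_of_update_two hkl (fun m hmk hml => ?_) ?_)
  · simp [transfer, hmk, erase_eq_of_notMem (hnot m hml)]
  · simpa [transfer, util_insert _ (hnot k hkl), util_erase _ ho, hkl.symm] using h

theorem Leximin.value_le_of_mem (hlex : Leximin value X) {c : ℕ}
    (hval : ∀ i o, value i o ∈ ({-1, 0, (c : ℤ)} : Set ℤ)) {k l : Fin n} {o : α}
    (ho : o ∈ X l) : value k o ≤ value l o := by
  obtain rfl | hkl := eq_or_ne k l
  · exact le_rfl
  by_contra! hlt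
  have hk := hval k o
  have hl := hval l o
  simp only [Set.mem_insert_iff, Set.mem_singleton_iff] at hk hl
  exact hlex.not_improved_by_transfer hkl ho (Or.inr (Prod.lt_iff.mpr (by omega)))

theorem Leximin.util_le_util_of_owner (hlex : Leximin value X) {c : ℕ}
    (hval : ∀ i o, value i o ∈ ({-1, 0, (c : ℤ)} : Set ℤ)) (k l : Fin n) :
    util (value k) (X l) ≤ util (value l) (X l) :=
  sum_le_sum fun _ ho => hlex.value_le_of_mem hval ho

theorem Leximin.util_erase_le_of_value_eq_c (hlex : Leximin value X) {c : ℕ} (hc : 0 < c)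
    (hval : ∀ i o, value i o ∈ ({-1, 0, (c : ℤ)} : Set ℤ)) {i j : Fin n} (hij : i ≠ j) {o : α}
    (ho : o ∈ X j) (hio : value i o = c) :
    util (value i) ((X j).erase o) ≤ util (value i) ((X i).erase o) := by
  rw [erase_eq_of_notMem (disjoint_right.mp (hlex.1.1 i j hij) ho), util_erase _ ho]
  have hjo : value j o = c := by
    have := hlex.value_le_of_mem hval (k := i) ho
    have := hval j o
    simp only [Set.mem_insert_iff, Set.mem_singleton_iff] at this
    omega
  have hown := hlex.util_le_util_of_owner hval i j
  by_contra! h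
  exact hlex.not_improved_by_transfer hij ho (Or.inl (by rw [hio, hjo]; omega))

theorem Leximin.util_erase_le_of_value_eq_neg_one (hlex : Leximin value X) {c : ℕ}
    (hval : ∀ i o, value i o ∈ ({-1, 0, (c : ℤ)} : Set ℤ)) {i j : Fin n} (hij : i ≠ j) {o : α}
    (ho : o ∈ X i) (hio : value i o = -1) :
    util (value i) ((X j).erase o) ≤ util (value i) ((X i).erase o) := by
  rw [erase_eq_of_notMem (disjoint_left.mp (hlex.1.1 i j hij) ho), util_erase _ ho]
  have hjo : value j o = -1 := by
    have := hlex.value_le_of_mem hval (k := j) ho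
    have := hval j o
    simp only [Set.mem_insert_iff, Set.mem_singleton_iff] at this
    omega
  have hown := hlex.util_le_util_of_owner hval i j
  by_contra! h
  exact hlex.not_improved_by_transfer hij.symm ho (Or.inl (by rw [hio, hjo]; omega))

end Leximin

/-- with `{-1, 0, c}`-additive valuations, every leximin allocation is
EF1: for any agents `i, j`, either `i` does not envy `j`, or there is an item
`o ∈ X_i ∪ X_j` with `v_i(X_i - o) ≥ v_i(X_j - o)`. -/
theorem leximin_is_EF1 {α : Type*} [Fintype α] [DecidableEq α]
    (n : ℕ) (c : ℕ) (hc : 0 < c) (value : Fin n → α → ℤ)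
    (hval : ∀ i o, value i o ∈ ({-1, 0, (c : ℤ)} : Set ℤ))
    (X : Fin n → Finset α) (hlex : Leximin value X) :
    ∀ i j : Fin n,
      util (value i) (X j) ≤ util (value i) (X i) ∨
      ∃ o ∈ X i ∪ X j,
        util (value i) ((X j).erase o) ≤ util (value i) ((X i).erase o) := by
  intro i j
  obtain rfl | hij := eq_or_ne i j
  · exact Or.inl le_rfl
  by_cases hgood : ∃ o ∈ X j, value i o = c
  · obtain ⟨o, ho, hio⟩ := hgood
    exact Or.inr ⟨o, mem_union_right _ ho, hlex.util_erase_le_of_value_eq_c hc hval hij ho hio⟩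
  by_cases hchore : ∃ o ∈ X i, value i o = -1
  · obtain ⟨o, ho, hio⟩ := hchore
    exact Or.inr ⟨o, mem_union_left _ ho, hlex.util_erase_le_of_value_eq_neg_one hval hij ho hio⟩
  push Not at hgood hchore
  have hvals (o : α) : value i o = -1 ∨ value i o = 0 ∨ value i o = c := by simpa using hval i o
  left
  calc util (value i) (X j) ≤ 0 :=
        sum_nonpos fun o ho => by have := hvals o; have := hgood o ho; omega
    _ ≤ util (value i) (X i) :=
        sum_nonneg fun o ho => by have := hvals o; have := hchore o ho; omega
end
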